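/- arXiv:2506.08747 — 2 statements merged into one kernel-verified Lean document; each statement's English description precedes it below -/
import Mathlib

section
/- Let G be an m×p real matrix with m ≥ p, let S be an m×m symmetric positive definite matrix, and let A be an m×m symmetric positive semidefinite matrix such that GᵀAG is invertible. Then the matrix (GᵀAG)⁻¹ GᵀA S A G (GᵀAG)⁻¹ - (Gᵀ S⁻¹ G)⁻¹ is positive semidefinite, provided Gᵀ S⁻¹ G is invertible. -/
/-!
The sandwich is `B S Bᴴ` with `B = (Gᴴ A G)⁻¹ Gᴴ A`, a left inverse of `G` (`B G = 1`). The
efficient left inverse is `B₀ = (Gᴴ S⁻¹ G)⁻¹ Gᴴ S⁻¹`, and `B S B₀ᴴ = (Gᴴ S⁻¹ G)⁻¹` for every left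
inverse `B`. Expanding `(B - B₀) S (B - B₀)ᴴ ⪰ 0` with this identity gives
`B S Bᴴ - (Gᴴ S⁻¹ G)⁻¹ ⪰ 0`. Invertibility of `Gᴴ S⁻¹ G` comes for free: `G` has a left inverse,
so it is injective and `Gᴴ S⁻¹ G` is positive definite.
-/

open Matrix

namespace Matrix

lemma mulVec_injective_of_mul_eq_one {m p R : Type*} [Fintype m] [Fintype p] [DecidableEq p]
    [Semiring R] {B : Matrix p m R} {G : Matrix m p R} (hBG : B * G = 1) :
    Function.Injective G.mulVec := fun x y hxy => by
  simpa only [mulVec_mulVec, hBG, one_mulVec] using congrArg (B *ᵥ ·) hxy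

variable {m p K : Type*} [Fintype m] [DecidableEq m] [Fintype p] [DecidableEq p]
  [Field K] [PartialOrder K] [StarRing K]

theorem PosDef.posSemidef_mul_mul_conjTranspose_sub_inv {S : Matrix m m K} (hS : S.PosDef)
    {G : Matrix m p K} {B : Matrix p m K} (hBG : B * G = 1) :
    (B * S * Bᴴ - (Gᴴ * S⁻¹ * G)⁻¹).PosSemidef := by
  set C := (Gᴴ * S⁻¹ * G)⁻¹
  set B₀ := C * Gᴴ * S⁻¹
  have hGSG : (Gᴴ * S⁻¹ * G).PosDef :=
    hS.inv.conjTranspose_mul_mul_same (mulVec_injective_of_mul_eq_one hBG)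
  have hC : Cᴴ = C := hGSG.1.inv.eq
  have hSS : S * S⁻¹ = 1 := mul_nonsing_inv S ((isUnit_iff_isUnit_det S).mp hS.isUnit)
  have hB₀ : B₀ᴴ = S⁻¹ * G * C := by
    simp only [B₀, conjTranspose_mul, hC, hS.inv.1.eq, conjTranspose_conjTranspose,
      Matrix.mul_assoc]
  have hB₀G : B₀ * G = 1 := by
    rw [show B₀ * G = C * (Gᴴ * S⁻¹ * G) by simp only [B₀, Matrix.mul_assoc]]
    exact nonsing_inv_mul _ ((isUnit_iff_isUnit_det _).mp hGSG.isUnit)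
  have cross : ∀ B' : Matrix p m K, B' * G = 1 → B' * S * B₀ᴴ = C := fun B' hB' => by
    rw [hB₀, show B' * S * (S⁻¹ * G * C) = B' * (S * S⁻¹) * G * C by
      simp only [Matrix.mul_assoc], hSS, Matrix.mul_one, hB', Matrix.one_mul]
  have cross' : B₀ * S * Bᴴ = C := by
    rw [← hC, ← cross B hBG]
    simp only [conjTranspose_mul, conjTranspose_conjTranspose, hS.1.eq, Matrix.mul_assoc]
  have key : B * S * Bᴴ - C = (B - B₀) * S * (B - B₀)ᴴ := by
    simp only [conjTranspose_sub, Matrix.sub_mul, Matrix.mul_sub, cross B hBG, cross B₀ hB₀G,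
      cross']
    abel
  rw [key]
  exact hS.posSemidef.mul_mul_conjTranspose_same _

theorem PosDef.posSemidef_sandwich_sub_inv {S : Matrix m m K} (hS : S.PosDef)
    {A : Matrix m m K} (hA : A.IsHermitian) {G : Matrix m p K} (hG : IsUnit (Gᴴ * A * G)) :
    ((Gᴴ * A * G)⁻¹ * Gᴴ * A * S * A * G * (Gᴴ * A * G)⁻¹ - (Gᴴ * S⁻¹ * G)⁻¹).PosSemidef := by
  have hBG : (Gᴴ * A * G)⁻¹ * Gᴴ * A * G = 1 := by
    simpa only [Matrix.mul_assoc] using nonsing_inv_mul _ ((isUnit_iff_isUnit_det _).mp hG)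
  have hB : ((Gᴴ * A * G)⁻¹ * Gᴴ * A)ᴴ = A * G * (Gᴴ * A * G)⁻¹ := by
    simp only [conjTranspose_mul, conjTranspose_nonsing_inv, hA.eq, conjTranspose_conjTranspose,
      Matrix.mul_assoc]
  have h := hS.posSemidef_mul_mul_conjTranspose_sub_inv hBG
  rw [hB] at h
  simpa only [Matrix.mul_assoc] using h

end Matrix

theorem stmt_4_general {m p : ℕ}
    (G : Matrix (Fin m) (Fin p) ℝ) (S : Matrix (Fin m) (Fin m) ℝ) (hS : S.PosDef)
    (A : Matrix (Fin m) (Fin m) ℝ) (hA : A.PosSemidef)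
    (h1 : IsUnit (Gᵀ * A * G)) :
    ((Gᵀ * A * G)⁻¹ * Gᵀ * A * S * A * G * (Gᵀ * A * G)⁻¹ - (Gᵀ * S⁻¹ * G)⁻¹).PosSemidef := by
  have h1' : IsUnit (Gᴴ * A * G) := by simpa only [conjTranspose_eq_transpose_of_trivial] using h1
  simpa only [conjTranspose_eq_transpose_of_trivial] using
    hS.posSemidef_sandwich_sub_inv hA.isHermitian h1'

theorem stmt_4 {m p : ℕ} (hmp : p ≤ m)
    (G : Matrix (Fin m) (Fin p) ℝ) (S : Matrix (Fin m) (Fin m) ℝ) (hS : S.PosDef)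
    (A : Matrix (Fin m) (Fin m) ℝ) (hA : A.PosSemidef)
    (h1 : IsUnit (Gᵀ * A * G)) (h2 : IsUnit (Gᵀ * S⁻¹ * G)) :
    ((Gᵀ * A * G)⁻¹ * Gᵀ * A * S * A * G * (Gᵀ * A * G)⁻¹ - (Gᵀ * S⁻¹ * G)⁻¹).PosSemidef :=
  stmt_4_general G S hS A hA h1
end

section
/- Let G be an m×p real matrix, S = CCᵀ with C invertible, and A an m×m matrix such that GᵀAG and GᵀS⁻¹G are invertible. Define H = (GᵀAG)⁻¹GᵀAC - (GᵀS⁻¹G)⁻¹GᵀC⁻ᵀ. Then (GᵀAG)⁻¹ GᵀA S A G (GᵀAG)⁻¹ = H Hᵀ + (GᵀS⁻¹G)⁻¹, assuming additionally that A is symmetric. -/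
/-!
Put `P = (GᵀAG)⁻¹GᵀA` and let `Q = (GᵀS⁻¹G)⁻¹GᵀS⁻¹` be the generalized least squares left
inverse of `G`; then `H = (P - Q)C`, so `HHᵀ = (P - Q)S(P - Q)ᵀ`. Since `QS = (GᵀS⁻¹G)⁻¹Gᵀ`,
every left inverse `X` of `G` satisfies `QSXᵀ = (GᵀS⁻¹G)⁻¹`. Applied to `X = P` and `X = Q`
(and transposed, `S` being symmetric), this makes the three terms of `(P - Q)S(P - Q)ᵀ` other
than `PSPᵀ` add up to `-(GᵀS⁻¹G)⁻¹`.
-/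

open Matrix

namespace Matrix

theorem isSymm_transpose_mul_mul {m n α : Type*} [Fintype m] [CommSemiring α]
    {A : Matrix m m α} (hA : A.IsSymm) (B : Matrix m n α) : (Bᵀ * A * B).IsSymm := by
  simp [IsSymm, transpose_mul, hA.eq, Matrix.mul_assoc]

variable {m n R : Type*} [Fintype m] [DecidableEq m] [Fintype n] [DecidableEq n] [CommRing R]

noncomputable def glsLeftInverse (G : Matrix m n R) (S : Matrix m m R) : Matrix n m R :=
  (Gᵀ * S⁻¹ * G)⁻¹ * Gᵀ * S⁻¹

variable {G : Matrix m n R} {S : Matrix m m R}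

theorem glsLeftInverse_mul_self (hL : IsUnit (Gᵀ * S⁻¹ * G).det) :
    glsLeftInverse G S * G = 1 := by
  calc (Gᵀ * S⁻¹ * G)⁻¹ * Gᵀ * S⁻¹ * G = (Gᵀ * S⁻¹ * G)⁻¹ * (Gᵀ * S⁻¹ * G) := by
        simp only [Matrix.mul_assoc]
    _ = 1 := nonsing_inv_mul _ hL

theorem glsLeftInverse_mul_mul_transpose (hS : IsUnit S.det) (P : Matrix n m R) :
    glsLeftInverse G S * S * Pᵀ = (Gᵀ * S⁻¹ * G)⁻¹ * (P * G)ᵀ := by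
  rw [glsLeftInverse, nonsing_inv_mul_cancel_right _ _ hS, transpose_mul, Matrix.mul_assoc]

theorem glsLeftInverse_mul_of_eq_mul_transpose {C : Matrix m m R} (hC : IsUnit C.det)
    (hS : S = C * Cᵀ) : glsLeftInverse G S * C = (Gᵀ * S⁻¹ * G)⁻¹ * Gᵀ * C⁻¹ᵀ := by
  have hSC : S⁻¹ * C = C⁻¹ᵀ := by
    rw [hS, mul_inv_rev, ← transpose_nonsing_inv, Matrix.mul_assoc, nonsing_inv_mul _ hC,
      Matrix.mul_one]
  rw [glsLeftInverse, Matrix.mul_assoc, hSC]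

theorem mul_mul_transpose_eq_of_mul_eq_one (hSsymm : S.IsSymm) (hS : IsUnit S.det)
    (hL : IsUnit (Gᵀ * S⁻¹ * G).det) {P : Matrix n m R} (hP : P * G = 1) :
    P * S * Pᵀ =
      (P - glsLeftInverse G S) * S * (P - glsLeftInverse G S)ᵀ + (Gᵀ * S⁻¹ * G)⁻¹ := by
  set Q := glsLeftInverse G S
  have hB : ((Gᵀ * S⁻¹ * G)⁻¹).IsSymm := (isSymm_transpose_mul_mul hSsymm.inv G).inv
  have hQP : Q * S * Pᵀ = (Gᵀ * S⁻¹ * G)⁻¹ := by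
    rw [glsLeftInverse_mul_mul_transpose hS, hP, transpose_one, Matrix.mul_one]
  have hQQ : Q * S * Qᵀ = (Gᵀ * S⁻¹ * G)⁻¹ := by
    rw [glsLeftInverse_mul_mul_transpose hS, glsLeftInverse_mul_self hL, transpose_one,
      Matrix.mul_one]
  have hPQ : P * S * Qᵀ = (Gᵀ * S⁻¹ * G)⁻¹ := by
    rw [← hB.eq, ← hQP, transpose_mul, transpose_mul, transpose_transpose, hSsymm.eq,
      Matrix.mul_assoc]
  simp only [transpose_sub, Matrix.sub_mul, Matrix.mul_sub]
  rw [hQP, hQQ, hPQ]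
  abel

end Matrix

theorem stmt_6 {m p : ℕ}
    (G : Matrix (Fin m) (Fin p) ℝ) (S C : Matrix (Fin m) (Fin m) ℝ)
    (hC : IsUnit C) (hfac : S = C * Cᵀ)
    (A : Matrix (Fin m) (Fin m) ℝ) (hAsymm : Aᵀ = A)
    (h1 : IsUnit (Gᵀ * A * G)) (h2 : IsUnit (Gᵀ * S⁻¹ * G))
    (H : Matrix (Fin p) (Fin m) ℝ)
    (hH : H = (Gᵀ * A * G)⁻¹ * Gᵀ * A * C - (Gᵀ * S⁻¹ * G)⁻¹ * Gᵀ * (C⁻¹)ᵀ) :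
    (Gᵀ * A * G)⁻¹ * Gᵀ * A * S * A * G * (Gᵀ * A * G)⁻¹ = H * Hᵀ + (Gᵀ * S⁻¹ * G)⁻¹ := by
  rw [isUnit_iff_isUnit_det] at hC h1 h2
  have hSsymm : S.IsSymm := hfac ▸ isSymm_mul_transpose_self C
  have hS : IsUnit S.det := by
    rw [hfac, det_mul]
    exact hC.mul (isUnit_det_transpose C hC)
  set P := (Gᵀ * A * G)⁻¹ * Gᵀ * A
  have hPG : P * G = 1 := by
    simp only [P, Matrix.mul_assoc]
    rw [← Matrix.mul_assoc Gᵀ, nonsing_inv_mul _ h1]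
  have hPt : Pᵀ = A * G * (Gᵀ * A * G)⁻¹ := by
    rw [transpose_mul, transpose_mul, transpose_nonsing_inv,
      (isSymm_transpose_mul_mul (A := A) hAsymm G).eq, hAsymm, transpose_transpose]
    simp only [Matrix.mul_assoc]
  have hHP : H = (P - glsLeftInverse G S) * C := by
    rw [hH, Matrix.sub_mul, glsLeftInverse_mul_of_eq_mul_transpose hC hfac]
  calc (Gᵀ * A * G)⁻¹ * Gᵀ * A * S * A * G * (Gᵀ * A * G)⁻¹ = P * S * Pᵀ := by
        rw [hPt]
        simp only [P, Matrix.mul_assoc]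
    _ = _ := mul_mul_transpose_eq_of_mul_eq_one hSsymm hS h2 hPG
    _ = H * Hᵀ + (Gᵀ * S⁻¹ * G)⁻¹ := by
        rw [hHP, transpose_mul, hfac]
        simp only [Matrix.mul_assoc]
end
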